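/- Let p be a prime, (A, δ) a δ-ring at p, and a, d, r ∈ A with δ(d) a unit. Suppose given sequences (λ_u)_{u≥0}, (R_u)_{u≥0} in A and units (w_u)_{u≥0} in A^× satisfying: λ₀·δ(d) = −1, R₀·δ(d) = δ(r), w_u = 1 − δ(d^{p^{u+1}}·λ_u), λ_{u+1}·w_u = λ_u^p, and R_{u+1}·w_u = δ(R_u) + w₁(d^{p^{u+1}}·λ_u·δ^{u+1}(a), R_u) for all u ≥ 0. Define μ₀ = δ(d) and μ_{u+1} = φ(μ_u)·w_u. Then every μ_u is a unit of A, and for every u ≥ 0 the element δ^{u+1}(d·a − r) − μ_u·(φ(δ^u(a)) − d^{p^{u+1}}·λ_u·δ^{u+1}(a) − R_u) lies in the ideal I_u of A generated by the elements d·a − r, δ(d·a − r), …, δ^u(d·a − r). -/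

import Mathlib

/-- The universal polynomial `w₁(x, y) = −∑_{j=1}^{p−1} (binom(p,j)/p)·x^j·y^{p−j}`. -/
def w1 (p : ℕ) {A : Type*} [CommRing A] (x y : A) : A :=
  -∑ j ∈ Finset.Ico 1 p, ((p.choose j / p : ℕ) : A) * x ^ j * y ^ (p - j)

/-- A δ-ring structure at `p` on a commutative ring `A`. -/
structure DeltaRing (p : ℕ) (A : Type*) [CommRing A] where
  δ : A → A
  δ_one : δ 1 = 0
  δ_mul : ∀ x y : A, δ (x * y) = δ x * y ^ p + x ^ p * δ y + (p : A) * δ x * δ y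
  δ_add : ∀ x y : A, δ (x + y) = δ x + δ y + w1 p x y

/-- The Frobenius lift associated to a δ-ring: `φ(x) = x^p + p·δ(x)`. -/
def DeltaRing.phi {p : ℕ} {A : Type*} [CommRing A] (D : DeltaRing p A) : A → A :=
  fun x => x ^ p + (p : A) * D.δ x

lemma w1_map (p : ℕ) {A B : Type*} [CommRing A] [CommRing B] (f : A →+* B) (x y : A) :
    f (w1 p x y) = w1 p (f x) (f y) := by
  simp [w1, map_sum, map_mul, map_pow]

lemma add_pow_w1 {p : ℕ} (hp : p.Prime) {A : Type*} [CommRing A] (x y : A) :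
    (x + y) ^ p = x ^ p + y ^ p - (p : A) * w1 p x y := by
  rw [add_pow, Finset.sum_range_succ, Finset.range_eq_Ico,
    Finset.sum_eq_sum_Ico_succ_bot hp.pos]
  have hsum : ∑ j ∈ Finset.Ico (0+1) p, x ^ j * y ^ (p - j) * ((p.choose j : ℕ) : A)
      = (p : A) * ∑ j ∈ Finset.Ico 1 p, ((p.choose j / p : ℕ) : A) * x ^ j * y ^ (p - j) := by
    rw [Finset.mul_sum, zero_add]
    apply Finset.sum_congr rfl
    intro j hj
    simp only [Finset.mem_Ico] at hj
    have hdvd : p ∣ p.choose j := hp.dvd_choose_self (by omega) hj.2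
    have hc : (p : A) * ((p.choose j / p : ℕ) : A) = ((p.choose j : ℕ) : A) := by
      rw [← Nat.cast_mul, Nat.mul_div_cancel' hdvd]
    calc x ^ j * y ^ (p - j) * ((p.choose j : ℕ) : A)
        = ((p : A) * ((p.choose j / p : ℕ) : A)) * (x ^ j * y ^ (p - j)) := by rw [hc]; ring
      _ = (p : A) * (((p.choose j / p : ℕ) : A) * x ^ j * y ^ (p - j)) := by ring
  rw [hsum]
  simp [w1]
  ring

section basics
variable {p : ℕ} {A : Type*} [CommRing A] (D : DeltaRing p A)

lemma w1_zero_left (x : A) : w1 p 0 x = 0 := by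
  simp only [w1, neg_eq_zero]
  apply Finset.sum_eq_zero
  intro j hj
  simp only [Finset.mem_Ico] at hj
  simp [zero_pow (by omega : j ≠ 0)]

lemma delta_zero' : D.δ 0 = 0 := by
  have h := D.δ_add 0 0
  rw [w1_zero_left, add_zero, add_zero] at h
  linear_combination -h

lemma DeltaRing.δ_sub (x y : A) : D.δ (x - y) = D.δ x - D.δ y - w1 p (x - y) y := by
  have h := D.δ_add (x - y) y
  rw [sub_add_cancel] at h
  linear_combination -h

lemma DeltaRing.phi_mul (x y : A) : D.phi (x * y) = D.phi x * D.phi y := by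
  simp only [DeltaRing.phi, D.δ_mul]
  ring

lemma DeltaRing.phi_one : D.phi 1 = 1 := by
  simp [DeltaRing.phi, D.δ_one]

lemma DeltaRing.phi_isUnit {x : A} (h : IsUnit x) : IsUnit (D.phi x) := by
  obtain ⟨v, hv⟩ := h.exists_left_inv
  exact IsUnit.of_mul_eq_one _ (by rw [← D.phi_mul, mul_comm, hv, D.phi_one])

end basics

section lift
variable {p : ℕ} {B : Type*} [CommRing B]

/-- Build a δ-ring from a Frobenius lift on a `p`-torsion-free ring. -/
noncomputable def DeltaRing.ofLift (hp : p.Prime)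
    (hreg : ∀ x y : B, (p : B) * x = (p : B) * y → x = y)
    (Φ : B →+* B) (h : ∀ x : B, ∃ c, Φ x = x ^ p + (p : B) * c) : DeltaRing p B where
  δ x := (h x).choose
  δ_one := by
    apply hreg
    have h1 := (h 1).choose_spec
    have hone : Φ 1 = 1 := map_one Φ
    linear_combination hone - h1
  δ_mul x y := by
    apply hreg
    have hx := (h x).choose_spec
    have hy := (h y).choose_spec
    have hxy := (h (x * y)).choose_spec
    have hm : Φ (x * y) = Φ x * Φ y := map_mul Φ x y
    linear_combination hm - hxy + Φ y * hx + (x ^ p + (p : B) * (h x).choose) * hy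
  δ_add x y := by
    apply hreg
    have hx := (h x).choose_spec
    have hy := (h y).choose_spec
    have hxy := (h (x + y)).choose_spec
    have hm : Φ (x + y) = Φ x + Φ y := map_add Φ x y
    have hpow := add_pow_w1 hp x y
    linear_combination hm - hxy + hx + hy - hpow

lemma DeltaRing.ofLift_spec (hp : p.Prime)
    (hreg : ∀ x y : B, (p : B) * x = (p : B) * y → x = y)
    (Φ : B →+* B) (h : ∀ x : B, ∃ c, Φ x = x ^ p + (p : B) * c) (x : B) :
    Φ x = x ^ p + (p : B) * (DeltaRing.ofLift hp hreg Φ h).δ x :=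
  (h x).choose_spec

end lift

section intring
variable {p : ℕ}

lemma int_fermat (hp : p.Prime) (a : ℤ) : ∃ c : ℤ, a = a ^ p + (p : ℤ) * c := by
  haveI := Fact.mk hp
  have : ((a - a ^ p : ℤ) : ZMod p) = 0 := by push_cast [ZMod.pow_card]; ring
  obtain ⟨c, hc⟩ := (ZMod.intCast_zmod_eq_zero_iff_dvd _ _).mp this
  exact ⟨c, by linarith [hc]⟩

lemma int_reg (hp : p.Prime) : ∀ x y : ℤ, (p : ℤ) * x = (p : ℤ) * y → x = y :=
  fun x y h => mul_left_cancel₀ (by exact_mod_cast hp.ne_zero) h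

noncomputable def DeltaRing.intDelta (hp : p.Prime) : DeltaRing p ℤ :=
  DeltaRing.ofLift hp (int_reg hp) (RingHom.id ℤ) (int_fermat hp)

lemma DeltaRing.intDelta_spec (hp : p.Prime) (a : ℤ) :
    a = a ^ p + (p : ℤ) * (DeltaRing.intDelta hp).δ a := by
  simpa [DeltaRing.intDelta] using DeltaRing.ofLift_spec hp (int_reg hp) (RingHom.id ℤ) (int_fermat hp) a

end intring

open MvPolynomial

section univ
variable {p : ℕ}

noncomputable def frobLift (p : ℕ) : MvPolynomial ℕ ℤ →+* MvPolynomial ℕ ℤ :=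
  (aeval (fun i => (X i : MvPolynomial ℕ ℤ) ^ p + (p : MvPolynomial ℕ ℤ) * X (i + 1))).toRingHom

lemma frobLift_X (n : ℕ) : frobLift p (X n) =
    (X n : MvPolynomial ℕ ℤ) ^ p + (p : MvPolynomial ℕ ℤ) * X (n + 1) := by
  simp [frobLift]

lemma frobLift_C (a : ℤ) : frobLift p (C a) = C a := by
  simp [frobLift, algebraMap_int_eq]

lemma int_fermat5 (hp : p.Prime) (a : ℤ) : ∃ c : ℤ, a = a ^ p + (p : ℤ) * c := by
  haveI := Fact.mk hp
  have : ((a - a ^ p : ℤ) : ZMod p) = 0 := by push_cast [ZMod.pow_card]; ring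
  obtain ⟨c, hc⟩ := (ZMod.intCast_zmod_eq_zero_iff_dvd _ _).mp this
  exact ⟨c, by linarith [hc]⟩

lemma frobLift_exists (hp : p.Prime) :
    ∀ f : MvPolynomial ℕ ℤ, ∃ c, frobLift p f = f ^ p + (p : MvPolynomial ℕ ℤ) * c := by
  intro f
  induction f using MvPolynomial.induction_on with
  | C a =>
    obtain ⟨c, hc⟩ := int_fermat5 hp a
    refine ⟨C c, ?_⟩
    rw [frobLift_C, ← map_pow]
    rw [show (p : MvPolynomial ℕ ℤ) = C (p : ℤ) by simp]
    rw [← map_mul, ← map_add, ← hc]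
  | add f g hf hg =>
    obtain ⟨cf, hcf⟩ := hf
    obtain ⟨cg, hcg⟩ := hg
    refine ⟨cf + cg + w1 p f g, ?_⟩
    rw [map_add, hcf, hcg, add_pow_w1 hp]
    ring
  | mul_X f n hf =>
    obtain ⟨cf, hcf⟩ := hf
    refine ⟨cf * (X n) ^ p + f ^ p * X (n + 1) + (p : MvPolynomial ℕ ℤ) * cf * X (n + 1), ?_⟩
    rw [map_mul, hcf, frobLift_X]
    ring

lemma mvreg (hp : p.Prime) : ∀ x y : MvPolynomial ℕ ℤ,
    (p : MvPolynomial ℕ ℤ) * x = (p : MvPolynomial ℕ ℤ) * y → x = y := by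
  intro x y h
  exact mul_left_cancel₀ (by exact_mod_cast (Nat.cast_ne_zero (R := ℤ)).mpr hp.ne_zero) h
end univ

section univ2
variable {p : ℕ}

noncomputable def mvDelta (hp : p.Prime) : DeltaRing p (MvPolynomial ℕ ℤ) :=
  DeltaRing.ofLift hp (mvreg hp) (frobLift p) (frobLift_exists hp)

lemma mvDelta_spec (hp : p.Prime) (f : MvPolynomial ℕ ℤ) :
    frobLift p f = f ^ p + (p : MvPolynomial ℕ ℤ) * (mvDelta hp).δ f :=
  DeltaRing.ofLift_spec hp _ _ _ f

lemma mvDelta_X (hp : p.Prime) (n : ℕ) : (mvDelta hp).δ (X n) = X (n + 1) := by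
  apply mvreg hp
  have h := mvDelta_spec hp (X n)
  rw [frobLift_X] at h
  linear_combination -h

lemma mvDelta_C (hp : p.Prime) (a : ℤ) :
    (mvDelta hp).δ (C a) = C ((DeltaRing.intDelta hp).δ a) := by
  apply mvreg hp
  have h := mvDelta_spec hp (C a)
  rw [frobLift_C] at h
  have h2 := DeltaRing.intDelta_spec hp a
  have h3 : (C a : MvPolynomial ℕ ℤ) = C (a ^ p) + C ((p:ℤ) * (DeltaRing.intDelta hp).δ a) := by
    rw [← map_add, ← h2]
  rw [map_mul, map_pow] at h3
  have h4 : (C ((p:ℤ)) : MvPolynomial ℕ ℤ) = (p : MvPolynomial ℕ ℤ) := by simp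
  rw [h4] at h3
  linear_combination h3 - h

lemma mvDelta_frobLift_comm (hp : p.Prime) (f : MvPolynomial ℕ ℤ) :
    (mvDelta hp).δ (frobLift p f) = frobLift p ((mvDelta hp).δ f) := by
  apply mvreg hp
  have h1 := mvDelta_spec hp (frobLift p f)
  have h2 := mvDelta_spec hp f
  have h3 : frobLift p (frobLift p f) =
      frobLift p f ^ p + (p : MvPolynomial ℕ ℤ) * frobLift p ((mvDelta hp).δ f) := by
    rw [← map_pow, ← map_natCast (frobLift p) p, ← map_mul, ← map_add, ← h2]
  linear_combination h3 - h1

-- universality of δ on integer constants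
lemma delta_intCast' (p : ℕ) {A : Type*} [CommRing A] (D : DeltaRing p A)
    (E : DeltaRing p ℤ) (a : ℤ) : D.δ ((a : ℤ) : A) = ((E.δ a : ℤ) : A) := by
  have step_up : ∀ m : ℤ, D.δ ((m : ℤ) : A) = ((E.δ m : ℤ) : A) →
      D.δ ((m + 1 : ℤ) : A) = ((E.δ (m + 1) : ℤ) : A) := by
    intro m ih
    have hB := D.δ_add ((m : ℤ) : A) 1
    have hZ := E.δ_add m 1
    rw [D.δ_one] at hB
    rw [E.δ_one] at hZ
    have hc : ((w1 p m 1 : ℤ) : A) = w1 p ((m : ℤ) : A) 1 := by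
      simpa using w1_map p (Int.castRingHom A) m 1
    have e : ((m + 1 : ℤ) : A) = ((m : ℤ) : A) + 1 := by push_cast; ring
    rw [e]
    have hZ' : ((E.δ (m + 1) : ℤ) : A) = ((E.δ m : ℤ) : A) + ((w1 p m 1 : ℤ) : A) := by
      rw [hZ]; push_cast; ring
    linear_combination hB + ih - hZ' - hc
  have step_down : ∀ m : ℤ, D.δ ((m : ℤ) : A) = ((E.δ m : ℤ) : A) →
      D.δ ((m - 1 : ℤ) : A) = ((E.δ (m - 1) : ℤ) : A) := by
    intro m ih
    have hB := D.δ_add ((m - 1 : ℤ) : A) 1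
    have hZ := E.δ_add (m - 1) 1
    rw [D.δ_one] at hB
    rw [E.δ_one] at hZ
    have e : ((m - 1 : ℤ) : A) + 1 = ((m : ℤ) : A) := by push_cast; ring
    rw [e] at hB
    rw [show m - 1 + 1 = m from by ring] at hZ
    have hc : ((w1 p (m - 1) 1 : ℤ) : A) = w1 p ((m - 1 : ℤ) : A) 1 := by
      simpa using w1_map p (Int.castRingHom A) (m - 1) 1
    have hZ' : ((E.δ (m - 1) : ℤ) : A) = ((E.δ m : ℤ) : A) - ((w1 p (m - 1) 1 : ℤ) : A) := by
      rw [show E.δ (m - 1) = E.δ m - w1 p (m - 1) 1 from by linear_combination -hZ]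
      push_cast; ring
    linear_combination -hB + ih - hZ' + hc
  induction a using Int.induction_on with
  | zero => simp [delta_zero' D, delta_zero' E]
  | succ n ih => exact step_up n ih
  | pred n ih => exact step_down (-n) ih

end univ2

section evsec
variable {p : ℕ} {A : Type*} [CommRing A]

noncomputable def evalδ (D : DeltaRing p A) (x : A) : MvPolynomial ℕ ℤ →+* A :=
  (aeval (fun i => D.δ^[i] x)).toRingHom

lemma evalδ_X (D : DeltaRing p A) (x : A) (n : ℕ) : evalδ D x (X n) = D.δ^[n] x := by
  simp [evalδ]

lemma evalδ_C (D : DeltaRing p A) (x : A) (a : ℤ) : evalδ D x (C a) = (a : A) := by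
  simp [evalδ, algebraMap_int_eq, eq_intCast]

lemma evalδ_delta (hp : p.Prime) (D : DeltaRing p A) (x : A) (f : MvPolynomial ℕ ℤ) :
    D.δ (evalδ D x f) = evalδ D x ((mvDelta hp).δ f) := by
  induction f using MvPolynomial.induction_on with
  | C a =>
    rw [evalδ_C, mvDelta_C hp, evalδ_C]
    exact delta_intCast' p D (DeltaRing.intDelta hp) a
  | add f g hf hg =>
    rw [map_add, D.δ_add, (mvDelta hp).δ_add, map_add, map_add, hf, hg,
      w1_map p (evalδ D x) f g]
  | mul_X f n hf =>
    rw [map_mul, D.δ_mul, (mvDelta hp).δ_mul]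
    simp only [map_add, map_mul, map_pow, map_natCast, hf, mvDelta_X hp, evalδ_X,
      Function.iterate_succ_apply']
  end evsec

lemma delta_phi_comm {p : ℕ} (hp : p.Prime) {A : Type*} [CommRing A] (D : DeltaRing p A)
    (x : A) : D.δ (D.phi x) = D.phi (D.δ x) := by
  have e0 : evalδ D x (X 0) = x := by rw [evalδ_X]; rfl
  have e1 : evalδ D x (X 1) = D.δ x := by rw [evalδ_X]; rfl
  have e2 : evalδ D x (X 2) = D.δ (D.δ x) := by rw [evalδ_X]; rfl
  have hphi : D.phi x = evalδ D x (frobLift p (X 0)) := by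
    rw [frobLift_X, map_add, map_pow, map_mul, map_natCast, e0, e1]
    rfl
  rw [hphi, evalδ_delta hp, mvDelta_frobLift_comm hp, mvDelta_X hp]
  rw [show (0 : ℕ) + 1 = 1 from rfl, frobLift_X, map_add, map_pow, map_mul, map_natCast, e1]
  rw [show (1 : ℕ) + 1 = 2 from rfl, e2]
  rfl

lemma dvd_w1 (p : ℕ) {A : Type*} [CommRing A] (x y : A) : x ∣ w1 p x y := by
  rw [w1, dvd_neg]
  apply Finset.dvd_sum
  intro j hj
  simp only [Finset.mem_Ico] at hj
  exact ((dvd_pow_self x (by omega : j ≠ 0)).mul_left _).mul_right _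

theorem statement4 (p : ℕ) (hp : p.Prime) {A : Type*} [CommRing A]
    (D : DeltaRing p A) (a d r : A) (hd : IsUnit (D.δ d))
    (lam Rr w : ℕ → A) (hw : ∀ u, IsUnit (w u))
    (hlam0 : lam 0 * D.δ d = -1)
    (hR0 : Rr 0 * D.δ d = D.δ r)
    (hwdef : ∀ u, w u = 1 - D.δ (d ^ p ^ (u + 1) * lam u))
    (hlamS : ∀ u, lam (u + 1) * w u = lam u ^ p)
    (hRS : ∀ u, Rr (u + 1) * w u =
      D.δ (Rr u) + w1 p (d ^ p ^ (u + 1) * lam u * D.δ^[u + 1] a) (Rr u))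
    (mu : ℕ → A) (hmu0 : mu 0 = D.δ d)
    (hmuS : ∀ u, mu (u + 1) = D.phi (mu u) * w u) :
    (∀ u, IsUnit (mu u)) ∧
    ∀ u, D.δ^[u + 1] (d * a - r) -
        mu u * (D.phi (D.δ^[u] a) - d ^ p ^ (u + 1) * lam u * D.δ^[u + 1] a - Rr u) ∈
      Ideal.span {x : A | ∃ k ≤ u, x = D.δ^[k] (d * a - r)} := by
  have hmuU : ∀ u, IsUnit (mu u) := by
    intro u
    induction u with
    | zero => rw [hmu0]; exact hd
    | succ u ih => rw [hmuS]; exact (D.phi_isUnit ih).mul (hw u)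
  refine ⟨hmuU, ?_⟩
  set e : A := d * a - r with he
  set I : ℕ → Ideal A := fun u => Ideal.span {x : A | ∃ k ≤ u, x = D.δ^[k] e} with hI
  have hgen : ∀ k u, k ≤ u → D.δ^[k] e ∈ I u := fun k u h =>
    Ideal.subset_span ⟨k, h, rfl⟩
  have hmono : ∀ u, I u ≤ I (u + 1) := fun u =>
    Ideal.span_mono (fun x ⟨k, hk, hx⟩ => ⟨k, by omega, hx⟩)
  have hw1mem : ∀ (u : ℕ) (x y : A), x ∈ I u → w1 p x y ∈ I u := by
    intro u x y hx
    obtain ⟨c, hc⟩ := dvd_w1 p x y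
    rw [hc]
    exact Ideal.mul_mem_right c _ hx
  have hδI : ∀ u z, z ∈ I u → D.δ z ∈ I (u + 1) := by
    intro u z hz
    refine (Submodule.span_induction
      (p := fun z _ => z ∈ I u ∧ D.δ z ∈ I (u + 1)) ?_ ?_ ?_ ?_ hz).2
    · rintro x ⟨k, hk, rfl⟩
      refine ⟨hgen k u hk, ?_⟩
      have := hgen (k + 1) (u + 1) (by omega)
      rwa [Function.iterate_succ_apply'] at this
    · exact ⟨zero_mem _, by rw [delta_zero' D]; exact zero_mem _⟩
    · rintro x y hx' hy' ⟨hx1, hx2⟩ ⟨hy1, hy2⟩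
      refine ⟨add_mem hx1 hy1, ?_⟩
      rw [D.δ_add]
      exact add_mem (add_mem hx2 hy2) (hmono u (hw1mem u x y hx1))
    · rintro c x hx' ⟨hx1, hx2⟩
      refine ⟨Submodule.smul_mem _ _ hx1, ?_⟩
      rw [smul_eq_mul, D.δ_mul]
      refine add_mem (add_mem ?_ ?_) ?_
      · exact Ideal.mul_mem_left _ _ (hmono u (Ideal.pow_mem_of_mem _ hx1 p hp.pos))
      · exact Ideal.mul_mem_left _ _ hx2
      · exact Ideal.mul_mem_left _ _ hx2
  intro u
  induction u with
  | zero =>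
    have hsub := D.δ_sub (d * a) r
    have hmul := D.δ_mul d a
    have hkey : D.δ^[0 + 1] e -
        mu 0 * (D.phi (D.δ^[0] a) - d ^ p ^ (0 + 1) * lam 0 * D.δ^[0 + 1] a - Rr 0) =
        - w1 p e r := by
      simp only [zero_add, pow_one, Function.iterate_one, Function.iterate_zero_apply,
        hmu0, DeltaRing.phi, he]
      linear_combination hsub + hmul + (d ^ p * D.δ a) * hlam0 + hR0
    rw [hkey]
    exact neg_mem (hw1mem 0 e r (hgen 0 0 le_rfl))
  | succ u ih =>
    set b1 : A := D.δ^[u + 1] a with hb1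
    set b2 : A := D.δ^[u + 1 + 1] a with hb2
    have hb12 : b2 = D.δ b1 := by rw [hb1, hb2, Function.iterate_succ_apply']
    set Y : A := d ^ p ^ (u + 1) * lam u * b1 with hYd
    set Tu : A := D.phi (D.δ^[u] a) - Y - Rr u with hTud
    set Tu1 : A := D.phi b1 - d ^ p ^ (u + 1 + 1) * lam (u + 1) * b2 - Rr (u + 1) with hTu1d
    show D.δ^[u + 1 + 1] e - mu (u + 1) * Tu1 ∈ I (u + 1)
    have ihm : D.δ^[u + 1] e - mu u * Tu ∈ I u := ih
    have h1 : mu u * Tu ∈ I (u + 1) := by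
      have h : mu u * Tu = D.δ^[u + 1] e - (D.δ^[u + 1] e - mu u * Tu) := by ring
      rw [h]
      exact sub_mem (hgen (u + 1) (u + 1) le_rfl) (hmono u ihm)
    have h2 : Tu ∈ I (u + 1) := by
      obtain ⟨v, hv⟩ := (hmuU u).exists_left_inv
      have h : Tu = v * (mu u * Tu) := by rw [← mul_assoc, hv, one_mul]
      rw [h]
      exact Ideal.mul_mem_left _ _ h1
    have h3 : D.δ (D.δ^[u + 1] e - mu u * Tu) ∈ I (u + 1) := hδI u _ ihm
    have h4 : D.δ^[u + 1 + 1] e = D.δ (mu u * Tu) + D.δ (D.δ^[u + 1] e - mu u * Tu) +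
        w1 p (mu u * Tu) (D.δ^[u + 1] e - mu u * Tu) := by
      rw [Function.iterate_succ_apply']
      have h : D.δ^[u + 1] e = mu u * Tu + (D.δ^[u + 1] e - mu u * Tu) := by ring
      conv_lhs => rw [h]
      rw [D.δ_add]
    have h5 : D.δ (mu u * Tu) = D.δ (mu u) * Tu ^ p + D.phi (mu u) * D.δ Tu := by
      rw [D.δ_mul, DeltaRing.phi]; ring
    have h6 : D.δ Tu = D.phi b1 - D.δ Y - D.δ (Rr u) - w1 p Y (Rr u)
        - w1 p Tu (Y + Rr u) := by
      have e1 : Tu = D.phi (D.δ^[u] a) - (Y + Rr u) := by rw [hTud]; ring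
      conv_lhs => rw [e1]
      rw [D.δ_sub, D.δ_add, delta_phi_comm hp D,
        show D.δ (D.δ^[u] a) = b1 from by rw [hb1, Function.iterate_succ_apply'], ← e1]
      ring
    have h8 : w u * Tu1 = D.phi b1 - D.δ Y - D.δ (Rr u) - w1 p Y (Rr u) := by
      have hmul := D.δ_mul (d ^ p ^ (u + 1) * lam u) (D.δ^[u + 1] a)
      have hpow : d ^ p ^ (u + 1 + 1) = (d ^ p ^ (u + 1)) ^ p := by
        rw [← pow_mul, ← pow_succ]
      rw [hTu1d, hYd, hb12, hb1, hpow]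
      simp only [DeltaRing.phi]
      linear_combination ((D.δ^[u + 1] a) ^ p + (p : A) * D.δ (D.δ^[u + 1] a)) * (hwdef u)
        - ((d ^ p ^ (u + 1)) ^ p * D.δ (D.δ^[u + 1] a)) * hlamS u - hRS u + hmul
    have hkey : D.δ^[u + 1 + 1] e - mu (u + 1) * Tu1 =
        D.δ (mu u) * Tu ^ p - D.phi (mu u) * w1 p Tu (Y + Rr u)
        + D.δ (D.δ^[u + 1] e - mu u * Tu)
        + w1 p (mu u * Tu) (D.δ^[u + 1] e - mu u * Tu) := by
      rw [h4, h5, hmuS u]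
      linear_combination D.phi (mu u) * h6 - D.phi (mu u) * h8
    rw [hkey]
    refine add_mem (add_mem (sub_mem ?_ ?_) h3) ?_
    · exact Ideal.mul_mem_left _ _ (Ideal.pow_mem_of_mem _ h2 p hp.pos)
    · exact Ideal.mul_mem_left _ _ (hw1mem (u + 1) _ _ h2)
    · exact hw1mem (u + 1) _ _ h1
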